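/- Let N ≥ 2, T > 0, and let u : (0,T) × ℝ^N → ℝ^N be continuously differentiable with div u = 0 everywhere. Let X_1, …, X_{N−1} : (0,T) × ℝ^N → ℝ^N be continuously differentiable vector fields each satisfying ∂_t X_i + (u·∇)X_i = (X_i·∇)u pointwise. Define W : (0,T) × ℝ^N → ℝ^N by the requirement W(t,x)·e = det(X_1(t,x), …, X_{N−1}(t,x), e) for every e ∈ ℝ^N. Then W satisfies pointwise ∂_t W + (u·∇)W = −(∇u)^T W, i.e. componentwise ∂_t W^k + Σ_j u^j ∂_j W^k + Σ_j (∂_k u^j) W^j = 0. -/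

import Mathlib

/-!
Fix `k` and write `W^k = det(X_1, …, X_{N-1}, e_k)`. Along the material derivative
`D = ∂_t + u·∇` each row `X_l` obeys the linear law `D X_l = (∇u) X_l` while `e_k` is constant, so
by multilinearity of the determinant `D W^k = Σ_l det(…, (∇u) X_l, …, e_k)`. Jacobi's identity
`Σ_j det(…, A v_j, …) = tr A · det(v_1, …, v_N)` rewrites this as
`tr(∇u) W^k - det(X_1, …, X_{N-1}, (∇u) e_k) = -Σ_j ∂_k u^j W^j`, because `tr ∇u = div u = 0`.
-/

open RealInnerProductSpace

/-- Partial derivative in the `i`-th coordinate direction of a scalar function on `ℝ^N`. -/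
noncomputable def pd {N : ℕ} (i : Fin N) (f : EuclideanSpace ℝ (Fin N) → ℝ)
    (x : EuclideanSpace ℝ (Fin N)) : ℝ :=
  fderiv ℝ f x (EuclideanSpace.single i 1)

open scoped Matrix

namespace Matrix

variable {n R : Type*} [Fintype n] [DecidableEq n] [CommRing R]

theorem sum_det_updateRow_mulVec (A M : Matrix n n R) :
    ∑ j, (M.updateRow j (A *ᵥ M j)).det = A.trace * M.det := by
  calc ∑ j, (M.updateRow j (A *ᵥ M j)).det = ∑ j, (Mᵀ.adjugate * (A * Mᵀ)) j j := by
        refine Finset.sum_congr rfl fun j _ => ?_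
        rw [← cramer_transpose_apply, cramer_eq_adjugate_mulVec, mulVec_mulVec, ← Matrix.mul_assoc]
        simp only [mulVec, dotProduct, mul_apply, transpose_apply]
    _ = (Mᵀ.adjugate * (A * Mᵀ)).trace := rfl
    _ = (A * (Mᵀ * Mᵀ.adjugate)).trace := by rw [trace_mul_comm, Matrix.mul_assoc]
    _ = A.trace * M.det := by
        rw [mul_adjugate, det_transpose, mul_smul_comm, Matrix.mul_one, trace_smul, smul_eq_mul,
          mul_comm]

theorem sum_erase_det_updateRow_mulVec (A M : Matrix n n R) (l : n) :
    ∑ j ∈ Finset.univ.erase l, (M.updateRow j (A *ᵥ M j)).det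
      = A.trace * M.det - (M.updateRow l (A *ᵥ M l)).det := by
  rw [← sum_det_updateRow_mulVec, ← Finset.sum_erase_add _ _ (Finset.mem_univ l),
    add_sub_cancel_right]

end Matrix

noncomputable def Matrix.detRowContinuousMultilinear (𝕜 n : Type*) [NontriviallyNormedField 𝕜]
    [Fintype n] [DecidableEq n] : ContinuousMultilinearMap 𝕜 (fun _ : n => n → 𝕜) 𝕜 :=
  { (Matrix.detRowAlternating : (n → 𝕜) [⋀^n]→ₗ[𝕜] 𝕜).toMultilinearMap with
    cont := continuous_id.matrix_det }

section DetDeriv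

variable {𝕜 E n : Type*} [NontriviallyNormedField 𝕜] [NormedAddCommGroup E] [NormedSpace 𝕜 E]
  [Fintype n] [DecidableEq n]

theorem hasFDerivAt_det_of_rows {c : E → n → n → 𝕜} {p : E}
    (hc : ∀ j i, DifferentiableAt 𝕜 (fun q => c q j i) p) :
    HasFDerivAt (fun q => (Matrix.of (c q)).det)
      ((Matrix.detRowContinuousMultilinear 𝕜 n).linearDeriv (c p) ∘L
        .pi fun j => .pi fun i => fderiv 𝕜 (fun q => c q j i) p) p :=
  ((Matrix.detRowContinuousMultilinear 𝕜 n).hasFDerivAt (c p)).comp p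
    (hasFDerivAt_pi.2 fun j => hasFDerivAt_pi.2 fun i => (hc j i).hasFDerivAt)

theorem fderiv_det_of_rows_apply {c : E → n → n → 𝕜} {p : E}
    (hc : ∀ j i, DifferentiableAt 𝕜 (fun q => c q j i) p) (v : E) :
    fderiv 𝕜 (fun q => (Matrix.of (c q)).det) p v
      = ∑ j, ((Matrix.of (c p)).updateRow j fun i => fderiv 𝕜 (fun q => c q j i) p v).det := by
  rw [(hasFDerivAt_det_of_rows hc).fderiv]
  simp only [ContinuousLinearMap.comp_apply, ContinuousMultilinearMap.linearDeriv_apply]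
  rfl

theorem fderiv_det_of_rows_apply_eq_trace_mul_sub {c : E → n → n → 𝕜} {p v : E}
    {A : Matrix n n 𝕜} {l : n} (hc : ∀ j i, DifferentiableAt 𝕜 (fun q => c q j i) p)
    (h_rows : ∀ j ≠ l, ∀ i, fderiv 𝕜 (fun q => c q j i) p v = (A *ᵥ c p j) i)
    (h_last : ∀ i, fderiv 𝕜 (fun q => c q l i) p v = 0) :
    fderiv 𝕜 (fun q => (Matrix.of (c q)).det) p v
      = A.trace * (Matrix.of (c p)).det - ((Matrix.of (c p)).updateRow l (A *ᵥ c p l)).det := by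
  have h_last_zero : ((Matrix.of (c p)).updateRow l
      fun i => fderiv 𝕜 (fun q => c q l i) p v).det = 0 :=
    Matrix.det_eq_zero_of_row_eq_zero l fun i => by simp [h_last]
  rw [fderiv_det_of_rows_apply hc, ← Finset.add_sum_erase _ _ (Finset.mem_univ l), h_last_zero,
    zero_add]
  refine (Finset.sum_congr rfl fun j hj => ?_).trans
    (Matrix.sum_erase_det_updateRow_mulVec A (Matrix.of (c p)) l)
  simp only [h_rows j (Finset.ne_of_mem_erase hj)]
  rfl

end DetDeriv

theorem fderiv_apply_one_eq_deriv_add_sum_pd {N : ℕ} {g : ℝ × EuclideanSpace ℝ (Fin N) → ℝ}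
    {t : ℝ} {x : EuclideanSpace ℝ (Fin N)} (hg : DifferentiableAt ℝ g (t, x))
    (v : EuclideanSpace ℝ (Fin N)) :
    fderiv ℝ g (t, x) (1, v)
      = deriv (fun s => g (s, x)) t + ∑ m, v m * pd m (fun y => g (t, y)) x := by
  have h_time : deriv (fun s => g (s, x)) t = fderiv ℝ g (t, x) (1, 0) := by
    exact (hg.hasFDerivAt.comp t (hasFDerivAt_prodMk_left t x)).hasDerivAt.deriv
  have h_space : ∀ m,
      pd m (fun y => g (t, y)) x = fderiv ℝ g (t, x) (0, EuclideanSpace.single m 1) := fun m =>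
    congrArg (fun L => L (EuclideanSpace.single m 1))
      (hg.hasFDerivAt.comp x (hasFDerivAt_prodMk_right t x)).fderiv
  have h_dir :
      ((1 : ℝ), v) = (1, 0) + ∑ m, v m • ((0 : ℝ), EuclideanSpace.single m (1 : ℝ)) := by
    ext i <;> simp [Prod.fst_sum, Prod.snd_sum, Pi.single_apply]
  rw [h_time, h_dir, map_add, map_sum]
  simp only [map_smul, smul_eq_mul, h_space]

section Frame

variable {N : ℕ}

def frameRows (X : Fin (N - 1) → Fin N → ℝ) (e : Fin N → ℝ) : Fin N → Fin N → ℝ :=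
  fun j => if h : (j : ℕ) < N - 1 then X ⟨j, h⟩ else e

theorem transpose_of_frameRows (X : Fin (N - 1) → Fin N → ℝ) (e : Fin N → ℝ) :
    (Matrix.of (frameRows X e))ᵀ = Matrix.of fun i j : Fin N =>
      if h : (j : ℕ) < N - 1 then X ⟨j, h⟩ i else e i := by
  ext i j
  by_cases h : (j : ℕ) < N - 1 <;> simp [frameRows, h]

theorem frameRows_of_ne (X : Fin (N - 1) → Fin N → ℝ) (e : Fin N → ℝ) {j : Fin N}
    (hj : (j : ℕ) ≠ N - 1) : frameRows X e j = X ⟨j, by omega⟩ := by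
  simp [frameRows, show (j : ℕ) < N - 1 by omega]

theorem frameRows_of_eq (X : Fin (N - 1) → Fin N → ℝ) (e : Fin N → ℝ) {j : Fin N}
    (hj : (j : ℕ) = N - 1) : frameRows X e j = e := by
  simp [frameRows, hj]

theorem updateRow_of_frameRows (X : Fin (N - 1) → Fin N → ℝ) (e b : Fin N → ℝ) {l : Fin N}
    (hl : (l : ℕ) = N - 1) :
    (Matrix.of (frameRows X e)).updateRow l b = Matrix.of (frameRows X b) := by
  ext j i
  by_cases h : j = l
  · subst h
    simp [frameRows_of_eq _ _ hl]
  · have hj : (j : ℕ) ≠ N - 1 := fun h' => h (Fin.ext (h'.trans hl.symm))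
    simp [Matrix.updateRow_ne h, frameRows_of_ne _ _ hj]

noncomputable def spatialJacobian (u : ℝ → EuclideanSpace ℝ (Fin N) → EuclideanSpace ℝ (Fin N))
    (t : ℝ) (x : EuclideanSpace ℝ (Fin N)) : Matrix (Fin N) (Fin N) ℝ :=
  Matrix.of fun i m => pd m (fun y => u t y i) x

variable {T : ℝ} {u : ℝ → EuclideanSpace ℝ (Fin N) → EuclideanSpace ℝ (Fin N)}
  {X : Fin (N - 1) → ℝ → EuclideanSpace ℝ (Fin N) → EuclideanSpace ℝ (Fin N)} {t : ℝ}

theorem differentiableAt_frameRows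
    (hX : ∀ l, ContDiffOn ℝ 1 (fun p : ℝ × EuclideanSpace ℝ (Fin N) => X l p.1 p.2)
      (Set.Ioo 0 T ×ˢ Set.univ))
    (ht : t ∈ Set.Ioo 0 T) (x : EuclideanSpace ℝ (Fin N)) (e : Fin N → ℝ) (j i : Fin N) :
    DifferentiableAt ℝ (fun q : ℝ × EuclideanSpace ℝ (Fin N) =>
      frameRows (fun l => X l q.1 q.2) e j i) (t, x) := by
  by_cases hj : (j : ℕ) = N - 1
  · simp only [frameRows_of_eq _ _ hj]
    exact differentiableAt_const _
  · simp only [frameRows_of_ne _ _ hj]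
    exact (EuclideanSpace.proj i : EuclideanSpace ℝ (Fin N) →L[ℝ] ℝ).differentiableAt.comp (t, x)
      (((hX _).differentiableOn one_ne_zero).differentiableAt
        ((isOpen_Ioo.prod isOpen_univ).mem_nhds ⟨ht, trivial⟩))

theorem fderiv_frameRows_apply_one
    (hX : ∀ l, ContDiffOn ℝ 1 (fun p : ℝ × EuclideanSpace ℝ (Fin N) => X l p.1 p.2)
      (Set.Ioo 0 T ×ˢ Set.univ))
    (htr : ∀ l, ∀ t ∈ Set.Ioo (0:ℝ) T, ∀ x, ∀ j : Fin N,
      deriv (fun s => X l s x j) t + ∑ k, u t x k * pd k (fun y => X l t y j) x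
        = ∑ k, X l t x k * pd k (fun y => u t y j) x)
    (ht : t ∈ Set.Ioo 0 T) (x : EuclideanSpace ℝ (Fin N)) (e : Fin N → ℝ) {j : Fin N}
    (hj : (j : ℕ) ≠ N - 1) (i : Fin N) :
    fderiv ℝ (fun q : ℝ × EuclideanSpace ℝ (Fin N) => frameRows (fun l => X l q.1 q.2) e j i)
        (t, x) (1, u t x)
      = (spatialJacobian u t x *ᵥ frameRows (fun l => X l t x) e j) i := by
  have h_diff := differentiableAt_frameRows hX ht x e j i
  simp only [frameRows_of_ne _ _ hj] at h_diff ⊢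
  rw [fderiv_apply_one_eq_deriv_add_sum_pd h_diff, htr _ t ht x i]
  simp only [spatialJacobian, Matrix.mulVec, dotProduct, Matrix.of_apply, mul_comm]

end Frame

theorem wedge_transport_equation_general (N : ℕ) (T : ℝ)
    (u : ℝ → EuclideanSpace ℝ (Fin N) → EuclideanSpace ℝ (Fin N))
    (X : Fin (N - 1) → ℝ → EuclideanSpace ℝ (Fin N) → EuclideanSpace ℝ (Fin N))
    (W : ℝ → EuclideanSpace ℝ (Fin N) → EuclideanSpace ℝ (Fin N))
    (hX : ∀ l, ContDiffOn ℝ 1 (fun p : ℝ × EuclideanSpace ℝ (Fin N) => X l p.1 p.2)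
      (Set.Ioo 0 T ×ˢ Set.univ))
    -- incompressibility: div u = 0
    (hdiv : ∀ t ∈ Set.Ioo (0:ℝ) T, ∀ x, ∑ i, pd i (fun y => u t y i) x = 0)
    -- each X_l solves the transported vector-field equation ∂_t X + (u·∇)X = (X·∇)u
    (htr : ∀ l, ∀ t ∈ Set.Ioo (0:ℝ) T, ∀ x, ∀ j : Fin N,
      deriv (fun s => X l s x j) t + ∑ k, u t x k * pd k (fun y => X l t y j) x
        = ∑ k, X l t x k * pd k (fun y => u t y j) x)
    -- W is defined by the requirement W(t,x)·e = det(X_1(t,x), …, X_{N−1}(t,x), e)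
    (hW : ∀ t ∈ Set.Ioo (0:ℝ) T, ∀ x, ∀ e : EuclideanSpace ℝ (Fin N),
      ⟪W t x, e⟫ = Matrix.det (Matrix.of fun i j : Fin N =>
        if h : (j : ℕ) < N - 1 then X ⟨j, h⟩ t x i else e i)) :
    ∀ t ∈ Set.Ioo (0:ℝ) T, ∀ x, ∀ k : Fin N,
      deriv (fun s => W s x k) t + ∑ j, u t x j * pd j (fun y => W t y k) x
        + ∑ j, pd k (fun y => u t y j) x * W t x j = 0 := by
  intro t ht x k
  have hW_det : ∀ s ∈ Set.Ioo (0:ℝ) T, ∀ y e,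
      ⟪W s y, e⟫ = (Matrix.of (frameRows (fun l => X l s y) e)).det := fun s hs y e => by
    rw [hW s hs y e, ← transpose_of_frameRows (fun l => X l s y), Matrix.det_transpose]
  have h_eq : (fun q : ℝ × EuclideanSpace ℝ (Fin N) => W q.1 q.2 k) =ᶠ[nhds (t, x)]
      fun q => (Matrix.of (frameRows (fun l => X l q.1 q.2) (Pi.single k 1))).det := by
    filter_upwards [(isOpen_Ioo.prod isOpen_univ).mem_nhds ⟨ht, trivial⟩] with q hq
    simpa [EuclideanSpace.inner_single_right] using
      hW_det q.1 hq.1 q.2 (EuclideanSpace.single k 1)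
  have h_diff := hasFDerivAt_det_of_rows (differentiableAt_frameRows hX ht x (Pi.single k 1))
  let last : Fin N := ⟨N - 1, by have := k.isLt; omega⟩
  have h_trace : (spatialJacobian u t x).trace = 0 := hdiv t ht x
  rw [← fderiv_apply_one_eq_deriv_add_sum_pd (h_diff.differentiableAt.congr_of_eventuallyEq h_eq),
    h_eq.fderiv_eq, fderiv_det_of_rows_apply_eq_trace_mul_sub (l := last)
      (differentiableAt_frameRows hX ht x _)
      (fun j hj => fderiv_frameRows_apply_one hX htr ht x _ fun h => hj (Fin.ext h))
      (fun i => by simp [frameRows_of_eq _ _ (rfl : (last : ℕ) = N - 1)]),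
    h_trace, zero_mul, zero_sub,
    updateRow_of_frameRows _ _ _ rfl, ← WithLp.ofLp_toLp 2 (_ *ᵥ _), ← hW_det t ht x]
  simp [PiLp.inner_apply, frameRows_of_eq _ _ (rfl : (last : ℕ) = N - 1), spatialJacobian]

/-- Let `u` be divergence-free and let `X_1, …, X_{N−1}` solve
`∂_t X_i + (u·∇)X_i = (X_i·∇)u`. If `W` is defined by `W·e = det(X_1, …, X_{N−1}, e)`,
then `∂_t W + (u·∇)W = −(∇u)ᵀ W`. -/
theorem wedge_transport_equation (N : ℕ) (hN : 2 ≤ N) (T : ℝ) (hT : 0 < T)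
    (u : ℝ → EuclideanSpace ℝ (Fin N) → EuclideanSpace ℝ (Fin N))
    (X : Fin (N - 1) → ℝ → EuclideanSpace ℝ (Fin N) → EuclideanSpace ℝ (Fin N))
    (W : ℝ → EuclideanSpace ℝ (Fin N) → EuclideanSpace ℝ (Fin N))
    (hu : ContDiffOn ℝ 1 (fun p : ℝ × EuclideanSpace ℝ (Fin N) => u p.1 p.2)
      (Set.Ioo 0 T ×ˢ Set.univ))
    (hX : ∀ l, ContDiffOn ℝ 1 (fun p : ℝ × EuclideanSpace ℝ (Fin N) => X l p.1 p.2)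
      (Set.Ioo 0 T ×ˢ Set.univ))
    -- incompressibility: div u = 0
    (hdiv : ∀ t ∈ Set.Ioo (0:ℝ) T, ∀ x, ∑ i, pd i (fun y => u t y i) x = 0)
    -- each X_l solves the transported vector-field equation ∂_t X + (u·∇)X = (X·∇)u
    (htr : ∀ l, ∀ t ∈ Set.Ioo (0:ℝ) T, ∀ x, ∀ j : Fin N,
      deriv (fun s => X l s x j) t + ∑ k, u t x k * pd k (fun y => X l t y j) x
        = ∑ k, X l t x k * pd k (fun y => u t y j) x)
    -- W is defined by the requirement W(t,x)·e = det(X_1(t,x), …, X_{N−1}(t,x), e)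
    (hW : ∀ t ∈ Set.Ioo (0:ℝ) T, ∀ x, ∀ e : EuclideanSpace ℝ (Fin N),
      ⟪W t x, e⟫ = Matrix.det (Matrix.of fun i j : Fin N =>
        if h : (j : ℕ) < N - 1 then X ⟨j, h⟩ t x i else e i)) :
    ∀ t ∈ Set.Ioo (0:ℝ) T, ∀ x, ∀ k : Fin N,
      deriv (fun s => W s x k) t + ∑ j, u t x j * pd j (fun y => W t y k) x
        + ∑ j, pd k (fun y => u t y j) x * W t x j = 0 :=
  wedge_transport_equation_general N T u X W hX hdiv htr hW
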